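/- Let (f_n) be a sequence of nonnegative functions of bounded variation on a compact interval [a,b], uniformly bounded by M and with total variations uniformly bounded by V. Then there exists a subsequence (f_{n_j}) and a function f of bounded variation on [a,b] such that f_{n_j}(z) → f(z) at every continuity point of f (Helly's selection theorem). -/

import Mathlib

/-!
Write `f n = p n - (p n - f n)` with `p n x` the variation of `f n` on `[a, x]`; both parts are
monotone and uniformly bounded, so it suffices to treat monotone sequences. For those, a diagonal
extraction gives convergence on `ℚ`; the `limsup` of the subsequence is then a monotone function
to which the subsequence converges at each of its continuity points, and a second extraction
handles its countably many discontinuities. Convergence thus holds at every point of `[a, b]`, and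
the variation bound passes to the limit by lower semicontinuity of the variation.
-/

open Filter Set Topology Bornology
open scoped ENNReal

theorem exists_subseq_tendsto_pi_of_isBounded {ι X : Type*} [Countable ι] [PseudoMetricSpace X]
    [ProperSpace X] (u : ℕ → ι → X) (hu : ∀ i, IsBounded (range fun n => u n i)) :
    ∃ φ : ℕ → ℕ, StrictMono φ ∧ ∃ L : ι → X,
      ∀ i, Tendsto (fun j => u (φ j) i) atTop (𝓝 (L i)) := by
  have hK : IsCompact (univ.pi fun i => closure (range fun n => u n i)) :=
    isCompact_univ_pi fun i => (hu i).isCompact_closure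
  obtain ⟨L, -, φ, hφ, hL⟩ :=
    hK.tendsto_subseq fun n => mem_univ_pi.2 fun i => subset_closure (mem_range_self n)
  exact ⟨φ, hφ, L, tendsto_pi_nhds.1 hL⟩

theorem tendsto_of_monotone_of_tendsto_rat {v : ℕ → ℝ → ℝ} (hv : ∀ n, Monotone (v n))
    {F : ℝ → ℝ} (hF : ∀ q : ℚ, Tendsto (fun n => v n q) atTop (𝓝 (F q))) {x : ℝ}
    (hx : ContinuousAt F x) : Tendsto (fun n => v n x) atTop (𝓝 (F x)) := by
  refine tendsto_order.2 ⟨fun c hc => ?_, fun c hc => ?_⟩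
  · obtain ⟨l, r, hxlr, hlr⟩ := mem_nhds_iff_exists_Ioo_subset.1 (hx.eventually (lt_mem_nhds hc))
    obtain ⟨q, hlq, hqx⟩ := exists_rat_btwn hxlr.1
    filter_upwards [(hF q).eventually (lt_mem_nhds (hlr ⟨hlq, hqx.trans hxlr.2⟩))] with n hn
    exact hn.trans_le (hv n hqx.le)
  · obtain ⟨l, r, hxlr, hlr⟩ := mem_nhds_iff_exists_Ioo_subset.1 (hx.eventually (gt_mem_nhds hc))
    obtain ⟨q, hxq, hqr⟩ := exists_rat_btwn hxlr.2
    filter_upwards [(hF q).eventually (gt_mem_nhds (hlr ⟨hxlr.1.trans hxq, hqr⟩))] with n hn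
    exact (hv n hxq.le).trans_lt hn

theorem exists_subseq_tendsto_of_monotone (u : ℕ → ℝ → ℝ) (hmono : ∀ n, Monotone (u n))
    (hbdd : ∀ x, IsBounded (range fun n => u n x)) :
    ∃ φ : ℕ → ℕ, StrictMono φ ∧ ∃ g : ℝ → ℝ,
      ∀ x, Tendsto (fun j => u (φ j) x) atTop (𝓝 (g x)) := by
  classical
  obtain ⟨φ₁, hφ₁, L, hL⟩ :=
    exists_subseq_tendsto_pi_of_isBounded (fun n (q : ℚ) => u n q) fun q => hbdd q
  have hbdd₁ : ∀ x, IsBounded (range fun j => u (φ₁ j) x) := fun x =>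
    (hbdd x).subset (range_comp_subset_range φ₁ fun n => u n x)
  set F : ℝ → ℝ := fun x => limsup (fun j => u (φ₁ j) x) atTop
  have hF : ∀ q : ℚ, Tendsto (fun j => u (φ₁ j) q) atTop (𝓝 (F q)) := fun q => by
    simpa only [F, (hL q).limsup_eq] using hL q
  have hFmono : Monotone F := fun x y hxy =>
    limsup_le_limsup (Eventually.of_forall fun j => hmono _ hxy)
      (BddBelow.isBoundedUnder_of_range (hbdd₁ x).bddBelow).isCoboundedUnder_le
      (BddAbove.isBoundedUnder_of_range (hbdd₁ y).bddAbove)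
  have := hFmono.countable_not_continuousAt.to_subtype
  obtain ⟨φ₂, hφ₂, L', hL'⟩ := exists_subseq_tendsto_pi_of_isBounded
    (fun j (x : {x | ¬ContinuousAt F x}) => u (φ₁ j) x) fun x => hbdd₁ x
  refine ⟨φ₁ ∘ φ₂, hφ₁.comp hφ₂, fun x => if h : ContinuousAt F x then F x else L' ⟨x, h⟩,
    fun x => ?_⟩
  dsimp only
  split_ifs with h
  · exact (tendsto_of_monotone_of_tendsto_rat (fun j => hmono _) hF h).comp hφ₂.tendsto_atTop
  · exact hL' ⟨x, h⟩

theorem exists_subseq_tendsto_of_eVariationOn_le {a b : ℝ} (hab : a ≤ b) {C : ℝ≥0∞}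
    (hC : C ≠ ⊤) (f : ℕ → ℝ → ℝ) (hvar : ∀ n, eVariationOn (f n) (Icc a b) ≤ C)
    (hbdd : ∀ x ∈ Icc a b, IsBounded (range fun n => f n x)) :
    ∃ φ : ℕ → ℕ, StrictMono φ ∧ ∃ g : ℝ → ℝ,
      ∀ x ∈ Icc a b, Tendsto (fun j => f (φ j) x) atTop (𝓝 (g x)) := by
  have ha : a ∈ Icc a b := left_mem_Icc.2 hab
  have hlbv : ∀ n, LocallyBoundedVariationOn (f n) (Icc a b) := fun n =>
    BoundedVariationOn.locallyBoundedVariationOn (ne_top_of_le_ne_top hC (hvar n))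
  set p : ℕ → ℝ → ℝ := fun n => variationOnFromTo (f n) (Icc a b) a
  have hp_mem : ∀ n, ∀ x ∈ Icc a b, p n x ∈ Icc 0 C.toReal := fun n x hx =>
    ⟨variationOnFromTo.nonneg_of_le _ _ hx.1, by
      change variationOnFromTo (f n) (Icc a b) a x ≤ C.toReal
      rw [variationOnFromTo.eq_of_le _ _ hx.1]
      exact ENNReal.toReal_mono hC ((eVariationOn.mono _ inter_subset_left).trans (hvar n))⟩
  -- `IccExtend` makes the two monotone parts of `f n = p n - (p n - f n)` monotone on all of `ℝ`.
  set P : ℕ → ℝ → ℝ := fun n => IccExtend hab fun y => p n y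
  set Q : ℕ → ℝ → ℝ := fun n => IccExtend hab fun y => p n y - f n y
  have hP_mono : ∀ n, Monotone (P n) := fun n =>
    (monotoneOn_iff_monotone.1 (variationOnFromTo.monotoneOn (hlbv n) ha)).IccExtend hab
  have hQ_mono : ∀ n, Monotone (Q n) := fun n =>
    (monotoneOn_iff_monotone.1 (variationOnFromTo.sub_self_monotoneOn (hlbv n) ha)).IccExtend hab
  have hP_bdd : ∀ x, IsBounded (range fun n => P n x) := fun x =>
    (Metric.isBounded_Icc 0 C.toReal).subset <| range_subset_iff.2 fun n =>
      hp_mem n _ (projIcc a b hab x).2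
  have hQ_bdd : ∀ x, IsBounded (range fun n => Q n x) := fun x =>
    ((hP_bdd x).sub (hbdd _ (projIcc a b hab x).2)).subset <| by
      rintro _ ⟨n, rfl⟩
      exact sub_mem_sub (mem_range_self n) (mem_range_self n)
  obtain ⟨φ₁, hφ₁, gP, hgP⟩ := exists_subseq_tendsto_of_monotone P hP_mono hP_bdd
  obtain ⟨φ₂, hφ₂, gQ, hgQ⟩ := exists_subseq_tendsto_of_monotone (fun j => Q (φ₁ j))
    (fun j => hQ_mono _) fun x => (hQ_bdd x).subset (range_comp_subset_range φ₁ fun n => Q n x)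
  refine ⟨φ₁ ∘ φ₂, hφ₁.comp hφ₂, gP - gQ, fun x hx => ?_⟩
  have hPQ : ∀ n, P n x - Q n x = f n x := fun n => by
    simp only [P, Q, IccExtend_of_mem hab _ hx, sub_sub_cancel]
  exact (((hgP x).comp hφ₂.tendsto_atTop).sub (hgQ x)).congr fun j => hPQ _

theorem eVariationOn_le_of_tendsto {α E ι : Type*} [LinearOrder α] [PseudoEMetricSpace E]
    {l : Filter ι} [l.NeBot] {F : ι → α → E} {f : α → E} {s : Set α} {C : ℝ≥0∞}
    (hF : ∀ x ∈ s, Tendsto (fun i => F i x) l (𝓝 (f x)))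
    (hC : ∀ᶠ i in l, eVariationOn (F i) s ≤ C) : eVariationOn f s ≤ C :=
  not_lt.1 fun h =>
    let ⟨_, hlt, hle⟩ := ((eVariationOn.lowerSemicontinuous_aux hF h).and hC).exists
    hlt.not_ge hle

theorem stmt_15_general (a b M V : ℝ) (hab : a ≤ b)
    (f : ℕ → ℝ → ℝ)
    (hbdd : ∀ n, ∀ z ∈ Set.Icc a b, f n z ∈ Set.Icc (0 : ℝ) M)
    (hvar : ∀ n, eVariationOn (f n) (Set.Icc a b) ≤ ENNReal.ofReal V) :
    ∃ (φ : ℕ → ℕ), StrictMono φ ∧ ∃ g : ℝ → ℝ,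
      eVariationOn g (Set.Icc a b) ≤ ENNReal.ofReal V ∧
      ∀ z ∈ Set.Icc a b, ContinuousWithinAt g (Set.Icc a b) z →
        Filter.Tendsto (fun j => f (φ j) z) Filter.atTop (nhds (g z)) := by
  obtain ⟨φ, hφ, g, hg⟩ := exists_subseq_tendsto_of_eVariationOn_le hab ENNReal.ofReal_ne_top f
    hvar fun z hz => (Metric.isBounded_Icc 0 M).subset (range_subset_iff.2 fun n => hbdd n z hz)
  exact ⟨φ, hφ, g, eVariationOn_le_of_tendsto hg (Eventually.of_forall fun j => hvar (φ j)),
    fun z hz _ => hg z hz⟩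

/-- Helly's selection theorem: a uniformly bounded sequence of nonnegative functions with
uniformly bounded variation on `[a,b]` admits a subsequence converging, at every continuity
point of the limit, to a function of bounded variation. -/
theorem stmt_15 (a b M V : ℝ) (hab : a ≤ b) (hM : 0 ≤ M) (hV : 0 ≤ V)
    (f : ℕ → ℝ → ℝ)
    (hbdd : ∀ n, ∀ z ∈ Set.Icc a b, f n z ∈ Set.Icc (0 : ℝ) M)
    (hvar : ∀ n, eVariationOn (f n) (Set.Icc a b) ≤ ENNReal.ofReal V) :
    ∃ (φ : ℕ → ℕ), StrictMono φ ∧ ∃ g : ℝ → ℝ,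
      eVariationOn g (Set.Icc a b) ≤ ENNReal.ofReal V ∧
      ∀ z ∈ Set.Icc a b, ContinuousWithinAt g (Set.Icc a b) z →
        Filter.Tendsto (fun j => f (φ j) z) Filter.atTop (nhds (g z)) :=
  stmt_15_general a b M V hab f hbdd hvar
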